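/- A finite relevant collection F of finite sets is an hke collection if and only if for every subcollection Γ ⊆ F with |Γ| ≥ 2, there exists some partition {Γ₁,Γ₂} of Γ into two non-empty subcollections such that |⋂Γ₁ − ⋃Γ₂| = |⋂Γ₂ − ⋃Γ₁|. -/

import Mathlib

open Finset

/-- Union of a finite collection of finite sets. -/
def collU {α : Type*} [DecidableEq α] (Γ : Finset (Finset α)) : Finset α :=
  Γ.sup id

/-- Intersection of a finite collection of finite sets
(equals the usual intersection when the collection is non-empty). -/
def collI {α : Type*} [DecidableEq α] (Γ : Finset (Finset α)) : Finset α :=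
  (Γ.sup id).filter (fun x => ∀ S ∈ Γ, x ∈ S)

/-- `e Γ = |⋃Γ| + |⋂Γ|` as an integer. -/
def collE {α : Type*} [DecidableEq α] (Γ : Finset (Finset α)) : ℤ :=
  (collU Γ).card + (collI Γ).card

/-- `F` is a hereditary König–Egerváry collection with common cardinality `a`. -/
def IsHKE {α : Type*} [DecidableEq α] (F : Finset (Finset α)) (a : ℕ) : Prop :=
  (∀ S ∈ F, S.card = a) ∧
  ∀ Γ ⊆ F, Γ.Nonempty → collE Γ = 2 * (a : ℤ)

/-! Write `e Γ = |⋃Γ| + |⋂Γ|`. Given a partition `{Γ₁, Γ₂}` of `Γ`, pick `S ∈ Γ₂` and put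
`P = Γ₂ \ {S}`. Inclusion–exclusion over `Θ ⊆ P` expresses the imbalance
`|⋂Γ₂ − ⋃Γ₁| − |⋂Γ₁ − ⋃Γ₂|` as the alternating sum of the increments
`e (Γ₁ ∪ Θ ∪ {S}) − e (Γ₁ ∪ Θ)`. If `e = 2α` on every proper non-empty subcollection of `Γ`, all
increments with `Θ ≠ P` vanish, so the imbalance is `±(e Γ − 2α)`. Hence, below a subcollection
on which `e = 2α` is already known, a single balanced partition of `Γ` is equivalent to
`e Γ = 2α`. This gives the forward direction at once, and the converse by strong induction on
`|Γ|`, singletons having `e {S} = 2|S| = 2α`. -/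

theorem Finset.sum_powerset_neg_one_pow_card_mul_card_filter {ι β : Type*} [DecidableEq ι]
    (u : Finset β) (P : Finset ι) (p : β → ι → Prop) [∀ x i, Decidable (p x i)] :
    ∑ Θ ∈ P.powerset, (-1 : ℤ) ^ #Θ * #{x ∈ u | ∀ i ∈ Θ, p x i} =
      #{x ∈ u | ∀ i ∈ P, ¬ p x i} := by
  simp only [card_filter, Nat.cast_sum, Nat.cast_ite, Nat.cast_one, Nat.cast_zero, mul_sum]
  rw [sum_comm]
  refine sum_congr rfl fun x _ => ?_
  have hpowerset : {Θ ∈ P.powerset | ∀ i ∈ Θ, p x i} = {i ∈ P | p x i}.powerset := by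
    ext Θ
    simp only [mem_filter, mem_powerset, subset_iff]
    grind
  simp only [mul_ite, mul_one, mul_zero]
  rw [← sum_filter, hpowerset, sum_powerset_neg_one_pow_card]
  simp only [filter_eq_empty_iff]

section Collections

variable {α : Type*} [DecidableEq α] {Γ Γ₁ Γ₂ : Finset (Finset α)}

lemma mem_collU {x : α} : x ∈ collU Γ ↔ ∃ S ∈ Γ, x ∈ S := by
  simp [collU, mem_sup]

lemma mem_collI (hΓ : Γ.Nonempty) {x : α} : x ∈ collI Γ ↔ ∀ S ∈ Γ, x ∈ S := by
  obtain ⟨T, hT⟩ := hΓ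
  simp only [collI, mem_filter, mem_sup, id]
  exact ⟨And.right, fun h => ⟨⟨T, hT, h T hT⟩, h⟩⟩

lemma collE_singleton (S : Finset α) : collE {S} = 2 * #S := by
  have hI : collI {S} = S := by ext; simp [mem_collI (singleton_nonempty S)]
  simp [collE, collU, hI, two_mul]

lemma collE_insert_sub_collE (S : Finset α) (hΓ : Γ.Nonempty) :
    collE (insert S Γ) - collE Γ = #(S \ collU Γ) - #(collI Γ \ S) := by
  have hU : collU (insert S Γ) = S ∪ collU Γ := by simp [collU]
  have hI : collI (insert S Γ) = collI Γ ∩ S := by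
    ext x
    simp only [mem_collI (insert_nonempty S Γ), mem_collI hΓ, mem_inter, forall_mem_insert]
    tauto
  have hUcard := card_sdiff_add_card S (collU Γ)
  have hIcard := card_sdiff_add_card_inter (collI Γ) S
  simp only [collE, hU, hI]
  omega

lemma card_collI_sdiff_collU_sub_eq_sum (S : Finset α) (P : Finset (Finset α))
    (hΓ₁ : Γ₁.Nonempty) :
    (#(collI (insert S P) \ collU Γ₁) : ℤ) - #(collI Γ₁ \ collU (insert S P)) =
      ∑ Θ ∈ P.powerset, (-1) ^ #Θ * (collE (insert S (Γ₁ ∪ Θ)) - collE (Γ₁ ∪ Θ)) := by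
  have hne : ∀ Θ, (Γ₁ ∪ Θ).Nonempty := fun Θ => hΓ₁.mono subset_union_left
  have hnew : ∀ Θ, S \ collU (Γ₁ ∪ Θ) = {x ∈ S \ collU Γ₁ | ∀ T ∈ Θ, x ∉ T} := by
    intro Θ; ext x; simp only [mem_sdiff, mem_filter, mem_collU, mem_union]; grind
  have hlost : ∀ Θ, collI (Γ₁ ∪ Θ) \ S = {x ∈ collI Γ₁ \ S | ∀ T ∈ Θ, x ∈ T} := by
    intro Θ; ext x; simp only [mem_sdiff, mem_filter, mem_collI (hne Θ), mem_collI hΓ₁, mem_union]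
    grind
  have hleft : collI (insert S P) \ collU Γ₁ = {x ∈ S \ collU Γ₁ | ∀ T ∈ P, ¬ x ∉ T} := by
    ext x; simp only [mem_sdiff, mem_filter, mem_collI (insert_nonempty S P), mem_insert]; grind
  have hright : collI Γ₁ \ collU (insert S P) = {x ∈ collI Γ₁ \ S | ∀ T ∈ P, x ∉ T} := by
    ext x; simp only [mem_sdiff, mem_filter, mem_collU, mem_insert]; grind
  simp only [collE_insert_sub_collE S (hne _), hnew, hlost, mul_sub, sum_sub_distrib,
    sum_powerset_neg_one_pow_card_mul_card_filter, hleft, hright]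

lemma card_collI_sdiff_collU_sub_eq (c : ℤ) (hd : Disjoint Γ₁ Γ₂) (h₁ : Γ₁.Nonempty)
    (h₂ : Γ₂.Nonempty) (hE : ∀ Δ ⊂ Γ₁ ∪ Γ₂, Δ.Nonempty → collE Δ = c) :
    (#(collI Γ₂ \ collU Γ₁) : ℤ) - #(collI Γ₁ \ collU Γ₂) =
      (-1) ^ (#Γ₂ - 1) * (collE (Γ₁ ∪ Γ₂) - c) := by
  obtain ⟨S, hS⟩ := h₂
  set P := Γ₂.erase S
  have hΓ₂ : insert S P = Γ₂ := insert_erase hS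
  have hSP : S ∉ P := notMem_erase S Γ₂
  have hSΓ₁ : S ∉ Γ₁ := disjoint_right.1 hd hS
  have hPΓ₁ : ∀ T ∈ P, T ∉ Γ₁ := fun T hT => disjoint_right.1 hd (mem_of_mem_erase hT)
  rw [← hΓ₂] at hE ⊢
  rw [card_collI_sdiff_collU_sub_eq_sum S P h₁, card_insert_of_notMem hSP,
    Nat.add_sub_cancel, sum_eq_single_of_mem P (mem_powerset_self P)]
  · have hlt : Γ₁ ∪ P ⊂ Γ₁ ∪ insert S P :=
      (ssubset_iff_of_subset (by gcongr; exact subset_insert S P)).2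
        ⟨S, by simp, by simp [hSΓ₁, hSP]⟩
    rw [← union_insert, hE _ hlt (h₁.mono subset_union_left)]
  · intro Θ hΘ hΘne
    have hΘP : Θ ⊂ P := ssubset_of_subset_of_ne (mem_powerset.1 hΘ) hΘne
    obtain ⟨T, hTP, hTΘ⟩ := (ssubset_iff_of_subset hΘP.subset).1 hΘP
    have hsub : insert S (Γ₁ ∪ Θ) ⊆ Γ₁ ∪ insert S P := by
      rw [← union_insert]; gcongr
    have hlt : insert S (Γ₁ ∪ Θ) ⊂ Γ₁ ∪ insert S P :=
      (ssubset_iff_of_subset hsub).2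
        ⟨T, by simp [hTP], by simp [hTΘ, hPΓ₁ T hTP, ne_of_mem_of_not_mem hTP hSP]⟩
    rw [hE _ hlt (insert_nonempty _ _),
      hE _ ((subset_insert S _).trans_ssubset hlt) (h₁.mono subset_union_left), sub_self, mul_zero]

lemma card_collI_sdiff_collU_eq_iff (c : ℤ) (hd : Disjoint Γ₁ Γ₂) (h₁ : Γ₁.Nonempty)
    (h₂ : Γ₂.Nonempty) (hE : ∀ Δ ⊂ Γ₁ ∪ Γ₂, Δ.Nonempty → collE Δ = c) :
    #(collI Γ₁ \ collU Γ₂) = #(collI Γ₂ \ collU Γ₁) ↔ collE (Γ₁ ∪ Γ₂) = c := by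
  have h := card_collI_sdiff_collU_sub_eq c hd h₁ h₂ hE
  constructor
  · intro hbal
    rw [hbal, sub_self, zero_eq_mul] at h
    exact sub_eq_zero.1 (h.resolve_left (pow_ne_zero _ (by norm_num)))
  · intro hc
    rw [hc, sub_self, mul_zero, sub_eq_zero] at h
    exact_mod_cast h.symm

end Collections

theorem stmt_12_general {α : Type*} [DecidableEq α] (F : Finset (Finset α))
    (a : ℕ) (hsize : ∀ S ∈ F, S.card = a) :
    IsHKE F a ↔
      ∀ Γ ⊆ F, 2 ≤ Γ.card →
        ∃ Γ₁ Γ₂ : Finset (Finset α),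
          Γ₁ ∪ Γ₂ = Γ ∧ Disjoint Γ₁ Γ₂ ∧ Γ₁.Nonempty ∧ Γ₂.Nonempty ∧
          (collI Γ₁ \ collU Γ₂).card = (collI Γ₂ \ collU Γ₁).card := by
  constructor
  · rintro ⟨-, hE⟩ Γ hΓF hΓ
    obtain ⟨S, hS⟩ := card_pos.1 (by omega : 0 < #Γ)
    have hrest : (Γ.erase S).Nonempty := by
      rw [← card_pos, card_erase_of_mem hS]; omega
    have hunion : {S} ∪ Γ.erase S = Γ := by rw [← insert_eq, insert_erase hS]
    have hd : Disjoint {S} (Γ.erase S) := disjoint_singleton_left.2 (notMem_erase S Γ)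
    have hsub : ∀ Δ ⊂ {S} ∪ Γ.erase S, Δ.Nonempty → collE Δ = 2 * a := by
      rw [hunion]
      exact fun Δ hΔ hne => hE Δ (hΔ.subset.trans hΓF) hne
    refine ⟨{S}, Γ.erase S, hunion, hd, singleton_nonempty S, hrest,
      (card_collI_sdiff_collU_eq_iff _ hd (singleton_nonempty S) hrest hsub).2 ?_⟩
    rw [hunion]
    exact hE Γ hΓF ⟨S, hS⟩
  · intro hbal
    refine ⟨hsize, fun Γ => ?_⟩
    induction Γ using Finset.strongInduction with
    | H Γ ih =>
      intro hΓF hΓ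
      rcases hΓ.exists_eq_singleton_or_nontrivial with ⟨S, rfl⟩ | hΓ
      · rw [collE_singleton, hsize S (hΓF (mem_singleton_self S))]
      · obtain ⟨Γ₁, Γ₂, rfl, hd, h₁, h₂, hbalance⟩ :=
          hbal _ hΓF (one_lt_card_iff_nontrivial.2 hΓ)
        exact (card_collI_sdiff_collU_eq_iff _ hd h₁ h₂ fun Δ hΔ hne =>
          ih Δ hΔ (hΔ.subset.trans hΓF) hne).1 hbalance

theorem stmt_12 {α : Type*} [DecidableEq α] (F : Finset (Finset α))
    (a : ℕ) (ha : 0 < a) (hsize : ∀ S ∈ F, S.card = a) :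
    IsHKE F a ↔
      ∀ Γ ⊆ F, 2 ≤ Γ.card →
        ∃ Γ₁ Γ₂ : Finset (Finset α),
          Γ₁ ∪ Γ₂ = Γ ∧ Disjoint Γ₁ Γ₂ ∧ Γ₁.Nonempty ∧ Γ₂.Nonempty ∧
          (collI Γ₁ \ collU Γ₂).card = (collI Γ₂ \ collU Γ₁).card :=
  stmt_12_general F a hsize
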